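/- Let 𝒯 = (T, λ) be a temporal oriented tree and let G be its connectivity graph. Then G contains no even hole, i.e., no induced cycle of even length at least 6. -/

import Mathlib

/-! A temporal digraph on vertex set `V` is encoded by its arc-labeling
`lab : V → V → Finset ℕ`: there is an arc `u → v` iff `lab u v` is nonempty,
and `lab u v` is the (finite) set of time-steps at which the arc `u → v` is active. -/

/-- A temporal (directed) path: vertices `verts 0, …, verts len`, pairwise distinct,
traversed at strictly increasing times `times 0 < … < times (len-1)`, each arc being
active at the time it is traversed. A single vertex (`len = 0`) is a temporal path. -/
structure TPath {V : Type*} (lab : V → V → Finset ℕ) where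
  len : ℕ
  verts : Fin (len + 1) → V
  times : Fin len → ℕ
  inj : Function.Injective verts
  mono : StrictMono times
  mem_lab : ∀ i : Fin len, times i ∈ lab (verts i.castSucc) (verts i.succ)

/-- The set of vertices lying on a temporal path. -/
def TPath.vertexSet {V : Type*} {lab : V → V → Finset ℕ} (P : TPath lab) : Set V :=
  Set.range P.verts

/-- `P` is a temporal path from `u` to `v`. -/
def TPath.FromTo {V : Type*} {lab : V → V → Finset ℕ} (P : TPath lab) (u v : V) : Prop :=
  P.verts 0 = u ∧ P.verts (Fin.last P.len) = v

/-- Two vertices are temporally connected if some temporal path contains both of them. -/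
def TempConnected {V : Type*} (lab : V → V → Finset ℕ) (u v : V) : Prop :=
  ∃ P : TPath lab, u ∈ P.vertexSet ∧ v ∈ P.vertexSet

/-- A temporal antichain: a set of pairwise not temporally connected vertices. -/
def IsTempAntichain {V : Type*} (lab : V → V → Finset ℕ) (S : Set V) : Prop :=
  S.Pairwise fun u v => ¬ TempConnected lab u v

/-- A family of temporal paths is a temporal path cover if every vertex lies on some path. -/
def IsTPC {V : Type*} (lab : V → V → Finset ℕ) {m : ℕ} (C : Fin m → TPath lab) : Prop :=
  ∀ v : V, ∃ i, v ∈ (C i).vertexSet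

/-- Two temporal paths are temporally disjoint if any two of their arcs sharing an
end-vertex are traversed at distinct time-steps. -/
def TDisjoint {V : Type*} {lab : V → V → Finset ℕ} (P Q : TPath lab) : Prop :=
  ∀ i : Fin P.len, ∀ j : Fin Q.len,
    (P.verts i.castSucc = Q.verts j.castSucc ∨ P.verts i.castSucc = Q.verts j.succ ∨
     P.verts i.succ = Q.verts j.castSucc ∨ P.verts i.succ = Q.verts j.succ) →
    P.times i ≠ Q.times j

/-- The set of possible cardinalities of temporal path covers. -/
def tpcSizes {V : Type*} (lab : V → V → Finset ℕ) : Set ℕ :=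
  {m | ∃ C : Fin m → TPath lab, IsTPC lab C}

/-- The set of possible cardinalities of temporally disjoint path covers. -/
def tdpcSizes {V : Type*} (lab : V → V → Finset ℕ) : Set ℕ :=
  {m | ∃ C : Fin m → TPath lab, IsTPC lab C ∧ ∀ i j, i ≠ j → TDisjoint (C i) (C j)}

/-- The set of possible cardinalities of temporal antichains. -/
def antichainSizes {V : Type*} (lab : V → V → Finset ℕ) : Set ℕ :=
  {m | ∃ S : Finset V, S.card = m ∧ IsTempAntichain lab ↑S}

/-- The underlying undirected graph (forget orientations and labels). -/
def underlyingGraph {V : Type*} (lab : V → V → Finset ℕ) : SimpleGraph V where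
  Adj u v := u ≠ v ∧ ((lab u v).Nonempty ∨ (lab v u).Nonempty)
  symm := ⟨by intro u v h; exact ⟨h.1.symm, h.2.symm⟩⟩
  loopless := ⟨by intro v h; exact h.1 rfl⟩

/-- All time labels are positive integers. -/
def PositiveLabels {V : Type*} (lab : V → V → Finset ℕ) : Prop :=
  ∀ u v : V, ∀ t ∈ lab u v, 0 < t

/-- A temporal oriented tree: the underlying undirected graph is a tree and the digraph is
an orientation of it (no pair of opposite arcs, no loops). -/
def IsTemporalOrientedTree {V : Type*} (lab : V → V → Finset ℕ) : Prop :=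
  (underlyingGraph lab).IsTree ∧ ∀ u v : V, (lab u v).Nonempty → lab v u = ∅

/-- The connectivity graph: two distinct vertices are adjacent iff temporally connected. -/
def connGraph {V : Type*} (lab : V → V → Finset ℕ) : SimpleGraph V where
  Adj u v := u ≠ v ∧ TempConnected lab u v
  symm := ⟨by intro u v h; exact ⟨h.1.symm, h.2.imp fun P hP => ⟨hP.2, hP.1⟩⟩⟩
  loopless := ⟨by intro v h; exact h.1 rfl⟩

/-- `c` lists the vertices of an induced cycle of length `n` of `G`, in cyclic order:
the listed vertices are distinct and two of them are adjacent iff they are cyclically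
consecutive. -/
def IsInducedCycle {V : Type*} (G : SimpleGraph V) (n : ℕ) (c : Fin n → V) : Prop :=
  Function.Injective c ∧
    ∀ i j : Fin n, G.Adj (c i) (c j) ↔ ((i.val + 1) % n = j.val ∨ (j.val + 1) % n = i.val)

/-- A hole: an induced cycle of length at least 5. -/
def HasHole {V : Type*} (G : SimpleGraph V) : Prop :=
  ∃ n, 5 ≤ n ∧ ∃ c : Fin n → V, IsInducedCycle G n c

/-- An anti-hole: an induced subgraph whose complement is a cycle of length at least 5. -/
def HasAntihole {V : Type*} (G : SimpleGraph V) : Prop :=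
  ∃ n, 5 ≤ n ∧ ∃ c : Fin n → V, IsInducedCycle Gᶜ n c

/-- A graph is weakly chordal if it has no hole and no anti-hole. -/
def WeaklyChordal {V : Type*} (G : SimpleGraph V) : Prop :=
  ¬ HasHole G ∧ ¬ HasAntihole G


/-!
Let `c₀, …, c_{n-1}` be an induced cycle of the connectivity graph with `n ≥ 6`, and let `Qⱼ` be a
temporal path joining `cⱼ` and `cⱼ₊₁`. If temporal paths `P₀, …, P_k` all pass through a vertex
`z`, then some `Pᵢ` reaches `z` before `Pᵢ₊₁` (indices mod `k + 1`) leaves it, and splicing the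
two temporally connects the start of `Pᵢ` to the end of `Pᵢ₊₁`. With two paths this shows that
sides `Qᵢ`, `Qⱼ` meeting in a vertex are at most two apart around the cycle. In the tree, the
median of `c₁`, `c₃`, `c₅` lies on `Q₁ ∪ Q₂`, on `Q₃ ∪ Q₄` and on `Q₅ ∪ ⋯ ∪ Qₙ`; this forces
`n = 6` and three alternate sides through one vertex, and the case of three paths then connects
two opposite corners of the hexagon.
-/

namespace TPath

variable {V : Type*} {lab : V → V → Finset ℕ}

def nil (u : V) : TPath lab where
  len := 0
  verts _ := u
  times := Fin.elim0
  inj a b _ := Fin.ext (by omega)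
  mono a := Fin.elim0 a
  mem_lab i := Fin.elim0 i

def take (P : TPath lab) (a : Fin (P.len + 1)) : TPath lab where
  len := a
  verts := P.verts ∘ Fin.castLE (by omega)
  times := P.times ∘ Fin.castLE (by omega)
  inj := P.inj.comp (Fin.castLE_injective _)
  mono := P.mono.comp (Fin.strictMono_castLE _)
  mem_lab i := P.mem_lab (Fin.castLE (by omega) i)

def snoc (P : TPath lab) (w : V) (s : ℕ) (hw : w ∉ P.vertexSet) (hs : ∀ i, P.times i < s)
    (hlab : s ∈ lab (P.verts (Fin.last P.len)) w) : TPath lab where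
  len := P.len + 1
  verts := Fin.snoc P.verts w
  times := Fin.snoc P.times s
  inj := Fin.snoc_injective_iff.2 ⟨P.inj, hw⟩
  mono := by
    intro a b hab
    induction b using Fin.lastCases with
    | last =>
      induction a using Fin.lastCases with
      | last => exact absurd hab (lt_irrefl _)
      | cast a => simpa using hs a
    | cast b =>
      induction a using Fin.lastCases with
      | last => exact absurd hab (not_lt.2 (Fin.le_last _))
      | cast a => simpa using P.mono (Fin.castSucc_lt_castSucc_iff.1 hab)
  mem_lab i := by
    induction i using Fin.lastCases with
    | last => simpa only [Fin.snoc_castSucc, Fin.succ_last, Fin.snoc_last] using hlab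
    | cast i => simpa only [Fin.snoc_castSucc, Fin.succ_castSucc] using P.mem_lab i

theorem FromTo.tempConnected {P : TPath lab} {u v : V} (h : P.FromTo u v) :
    TempConnected lab u v :=
  ⟨P, h.1 ▸ ⟨0, rfl⟩, h.2 ▸ ⟨_, rfl⟩⟩

theorem adj (P : TPath lab) (i : Fin P.len) :
    (underlyingGraph lab).Adj (P.verts i.castSucc) (P.verts i.succ) :=
  ⟨P.inj.ne Fin.castSucc_lt_succ.ne, Or.inl ⟨_, P.mem_lab i⟩⟩

end TPath

theorem TempConnected.symm {V : Type*} {lab : V → V → Finset ℕ} {u v : V}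
    (h : TempConnected lab u v) : TempConnected lab v u :=
  let ⟨P, hu, hv⟩ := h; ⟨P, hv, hu⟩

/-- `TReach lab u v t`: some temporal walk, which may revisit vertices, leads from `u` to `v`
using only time-steps `< t`. -/
inductive TReach {V : Type*} (lab : V → V → Finset ℕ) (u : V) : V → ℕ → Prop
  | refl (t : ℕ) : TReach lab u u t
  | tail {v w : V} {t s t' : ℕ} :
      TReach lab u v t → t ≤ s → s ∈ lab v w → s < t' → TReach lab u w t'

namespace TReach

variable {V : Type*} {lab : V → V → Finset ℕ} {u v : V} {t : ℕ}

theorem mono (h : TReach lab u v t) {t' : ℕ} (htt' : t ≤ t') : TReach lab u v t' := by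
  cases h with
  | refl => exact refl t'
  | tail h hts hs hst => exact tail h hts hs (hst.trans_le htt')

/-- A step onto a vertex already on the path cuts the path back to that vertex. -/
theorem exists_tPath (h : TReach lab u v t) :
    ∃ P : TPath lab, P.FromTo u v ∧ ∀ i, P.times i < t := by
  induction h with
  | refl t => exact ⟨TPath.nil u, ⟨rfl, rfl⟩, fun i => i.elim0⟩
  | @tail v w t s t' _ hts hs hst ih =>
    obtain ⟨P, ⟨hP0, hPl⟩, hPt⟩ := ih
    by_cases hw : w ∈ P.vertexSet
    · obtain ⟨a, rfl⟩ := hw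
      exact ⟨P.take a, ⟨hP0, rfl⟩, fun i => (hPt _).trans (by omega)⟩
    · refine ⟨P.snoc w s hw (fun i => (hPt i).trans_le hts) (hPl ▸ hs), ⟨?_, ?_⟩, ?_⟩
      · exact (Fin.snoc_castSucc (α := fun _ => V) w P.verts 0).trans hP0
      · simp [TPath.snoc]
      · intro i
        induction i using Fin.lastCases with
        | last => simpa [TPath.snoc] using hst
        | cast i => simpa [TPath.snoc] using ((hPt i).trans_le hts).trans hst

end TReach

namespace TPath

variable {V : Type*} {lab : V → V → Finset ℕ} {u : V}

theorem tReach_verts (P : TPath lab) {q : Fin (P.len + 1)} {t : ℕ}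
    (h : TReach lab u (P.verts q) t) (ht : ∀ k : Fin P.len, q ≤ k.castSucc → t ≤ P.times k)
    (j : Fin (P.len + 1)) (hqj : q ≤ j) {T : ℕ} (htT : t ≤ T)
    (hT : ∀ k : Fin P.len, q ≤ k.castSucc → k.succ ≤ j → P.times k < T) :
    TReach lab u (P.verts j) T := by
  induction j using Fin.induction generalizing T with
  | zero => exact (nonpos_iff_eq_zero.1 hqj) ▸ h.mono htT
  | succ i ih =>
    rcases eq_or_ne q i.succ with rfl | hqi
    · exact h.mono htT
    have hqi : q ≤ i.castSucc := Fin.le_castSucc_iff.2 (hqj.lt_of_ne hqi)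
    refine .tail (ih hqi (ht i hqi) fun k hk hki => P.mono ?_) le_rfl (P.mem_lab i)
      (hT i hqi le_rfl)
    simpa using hki

theorem exists_fromTo_of_tReach (P : TPath lab) {q : Fin (P.len + 1)} {t : ℕ}
    (h : TReach lab u (P.verts q) t) (ht : ∀ k : Fin P.len, q ≤ k.castSucc → t ≤ P.times k)
    (j : Fin (P.len + 1)) (hqj : q ≤ j) : ∃ S : TPath lab, S.FromTo u (P.verts j) :=
  let ⟨S, hS, _⟩ := (P.tReach_verts h ht j hqj (T := t + Finset.univ.sup P.times + 1) (by omega)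
    fun k _ _ => by have := Finset.le_sup (f := P.times) (Finset.mem_univ k); omega).exists_tPath
  ⟨S, hS⟩

theorem exists_fromTo_of_le (P : TPath lab) {a b : Fin (P.len + 1)} (hab : a ≤ b) :
    ∃ S : TPath lab, S.FromTo (P.verts a) (P.verts b) :=
  P.exists_fromTo_of_tReach (.refl 0) (fun _ _ => Nat.zero_le _) b hab

theorem tempConnected_of_times_lt (P R : TPath lab) {e : Fin P.len} {f : Fin R.len}
    (hef : P.verts e.succ = R.verts f.castSucc) (hlt : P.times e < R.times f) :
    TempConnected lab (P.verts 0) (R.verts (Fin.last R.len)) := by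
  have hz : TReach lab (P.verts 0) (P.verts e.succ) (R.times f) :=
    P.tReach_verts (.refl 0) (fun _ _ => Nat.zero_le _) e.succ (Fin.zero_le _) (Nat.zero_le _)
      fun k _ hk => (P.mono.monotone (by simpa using hk)).trans_lt hlt
  obtain ⟨S, hS⟩ := R.exists_fromTo_of_tReach (hef ▸ hz)
    (fun k hk => R.mono.monotone (by simpa using hk)) _ (Fin.le_last _)
  exact hS.tempConnected

theorem exists_times_lt_of_mem (P : TPath lab) {z : V} (hz : z ∈ P.vertexSet)
    (h0 : z ≠ P.verts 0) (hl : z ≠ P.verts (Fin.last P.len)) :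
    ∃ e f : Fin P.len,
      P.verts e.succ = z ∧ P.verts f.castSucc = z ∧ P.times e < P.times f := by
  obtain ⟨p, rfl⟩ := hz
  obtain ⟨e, rfl⟩ := Fin.exists_succ_eq.2 fun hp => h0 (hp ▸ rfl)
  obtain ⟨f, hf⟩ := Fin.exists_castSucc_eq.2 fun hp => hl (hp ▸ rfl)
  refine ⟨e, f, rfl, hf ▸ rfl, P.mono (Fin.lt_def.2 ?_)⟩
  simp only [Fin.ext_iff, Fin.val_castSucc, Fin.val_succ] at hf
  omega

end TPath

theorem TempConnected.exists_fromTo {V : Type*} {lab : V → V → Finset ℕ} {u v : V}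
    (h : TempConnected lab u v) :
    ∃ P : TPath lab, P.FromTo u v ∨ P.FromTo v u := by
  obtain ⟨P, ⟨a, rfl⟩, ⟨b, rfl⟩⟩ := h
  rcases le_total a b with hab | hba
  · exact (P.exists_fromTo_of_le hab).imp fun _ => .inl
  · exact (P.exists_fromTo_of_le hba).imp fun _ => .inr

section Cyclic

variable {V : Type*} {lab : V → V → Finset ℕ}

/-- If no `a i` reaches `b (i + 1)`, the time at which `P i` leaves `z` strictly decreases
along the cycle `i ↦ i + 1`, which is absurd. -/
theorem exists_tempConnected_of_forall_mem {k : ℕ} {P : Fin (k + 1) → TPath lab}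
    {a b : Fin (k + 1) → V} (hP : ∀ i, (P i).FromTo (a i) (b i)) {z : V}
    (hz : ∀ i, z ∈ (P i).vertexSet) : ∃ i, TempConnected lab (a i) (b (i + 1)) := by
  by_contra! hnc
  have hstart : ∀ i, z ≠ (P i).verts 0 := fun i h =>
    hnc i ⟨P (i + 1), (hP i).1 ▸ h ▸ hz (i + 1), (hP (i + 1)).2 ▸ ⟨_, rfl⟩⟩
  have hend : ∀ i, z ≠ (P i).verts (Fin.last _) := fun i h =>
    hnc (i - 1)
      ⟨P (i - 1), (hP (i - 1)).1 ▸ ⟨0, rfl⟩, by simpa [← (hP i).2, ← h] using hz (i - 1)⟩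
  choose e f hze hzf hef using fun i => (P i).exists_times_lt_of_mem (hz i) (hstart i) (hend i)
  have hdec : ∀ i, (P (i + 1)).times (f (i + 1)) < (P i).times (f i) := by
    intro i
    refine lt_of_le_of_lt (not_lt.1 fun h => hnc i ?_) (hef i)
    simpa [(hP i).1, (hP (i + 1)).2] using
      (P i).tempConnected_of_times_lt (P (i + 1)) ((hze i).trans (hzf (i + 1)).symm) h
  obtain ⟨i, hi⟩ := Finite.exists_min fun i => (P i).times (f i)
  exact (hdec i).not_ge (hi (i + 1))

theorem TPath.FromTo.tempConnected_or_of_mem {P R : TPath lab} {a b c d z : V}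
    (hP : P.FromTo a b) (hR : R.FromTo c d) (hzP : z ∈ P.vertexSet) (hzR : z ∈ R.vertexSet) :
    TempConnected lab a d ∨ TempConnected lab c b := by
  obtain ⟨i, hi⟩ := exists_tempConnected_of_forall_mem (P := ![P, R]) (a := ![a, c])
    (b := ![b, d]) (z := z) (by simp [Fin.forall_fin_two, hP, hR])
    (by simp [Fin.forall_fin_two, hzP, hzR])
  fin_cases i
  exacts [.inl hi, .inr hi]

theorem TPath.FromTo.tempConnected_or_or_of_mem {P₀ P₁ P₂ : TPath lab}
    {a₀ b₀ a₁ b₁ a₂ b₂ z : V}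
    (h₀ : P₀.FromTo a₀ b₀) (h₁ : P₁.FromTo a₁ b₁) (h₂ : P₂.FromTo a₂ b₂)
    (hz₀ : z ∈ P₀.vertexSet) (hz₁ : z ∈ P₁.vertexSet) (hz₂ : z ∈ P₂.vertexSet) :
    TempConnected lab a₀ b₁ ∨ TempConnected lab a₁ b₂ ∨ TempConnected lab a₂ b₀ := by
  obtain ⟨i, hi⟩ := exists_tempConnected_of_forall_mem (P := ![P₀, P₁, P₂])
    (a := ![a₀, a₁, a₂]) (b := ![b₀, b₁, b₂]) (z := z) (by simp [Fin.forall_fin_succ, h₀, h₁, h₂])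
    (by simp [Fin.forall_fin_succ, hz₀, hz₁, hz₂])
  fin_cases i
  exacts [.inl hi, .inr (.inl hi), .inr (.inr hi)]

end Cyclic

theorem TPath.FromTo.exists_walk {V : Type*} {lab : V → V → Finset ℕ} {P : TPath lab}
    {u v : V} (h : P.FromTo u v) :
    ∃ w : (underlyingGraph lab).Walk u v, ∀ y ∈ w.support, y ∈ P.vertexSet := by
  have hchain : (List.ofFn P.verts).IsChain (underlyingGraph lab).Adj :=
    List.isChain_ofFn.2 fun i hi => P.adj ⟨i, by omega⟩
  refine ⟨(SimpleGraph.Walk.ofSupport _ (by simp) hchain).copy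
    (by rw [List.head_ofFn]; exact h.1) (by rw [List.getLast_ofFn]; exact h.2), fun y hy => ?_⟩
  rwa [SimpleGraph.Walk.support_copy, SimpleGraph.Walk.support_ofSupport, List.mem_ofFn'] at hy

namespace SimpleGraph

variable {V : Type*} {G : SimpleGraph V}

theorem exists_walk_of_forall_exists_walk_succ {x : ℕ → V} {S : ℕ → Set V}
    (h : ∀ j, ∃ w : G.Walk (x j) (x (j + 1)), ∀ y ∈ w.support, y ∈ S j) {a b : ℕ}
    (hab : a < b) :
    ∃ w : G.Walk (x a) (x b), ∀ y ∈ w.support, ∃ j, a ≤ j ∧ j < b ∧ y ∈ S j := by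
  induction b, hab using Nat.le_induction with
  | base => exact (h a).imp fun w hw y hy => ⟨a, le_rfl, a.lt_succ_self, hw y hy⟩
  | succ b hab ih =>
    obtain ⟨w₁, hw₁⟩ := ih
    obtain ⟨w₂, hw₂⟩ := h b
    refine ⟨w₁.append w₂, fun y hy => ?_⟩
    rcases (Walk.mem_support_append_iff _ _).1 hy with hy | hy
    · obtain ⟨j, hj⟩ := hw₁ y hy
      exact ⟨j, hj.1, by omega, hj.2.2⟩
    · exact ⟨b, by omega, b.lt_succ_self, hw₂ y hy⟩

theorem IsAcyclic.exists_mem_support_of_isPath (hG : G.IsAcyclic) {u v w : V}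
    {p : G.Walk u v} {q : G.Walk v w} {r : G.Walk u w} (hp : p.IsPath) (hq : q.IsPath)
    (hr : r.IsPath) :
    ∃ m, m ∈ p.support ∧ m ∈ q.support ∧ m ∈ r.support := by
  classical
  induction q with
  | nil => exact ⟨_, p.end_mem_support, Walk.start_mem_support _, r.end_mem_support⟩
  | @cons v v' w hvv' q ih =>
    have hq' := hq.of_cons
    by_cases hv' : v' ∈ p.support
    · obtain ⟨m, hmp, hmq, hmr⟩ := ih (hp.takeUntil hv') hq' hr
      exact ⟨m, p.support_takeUntil_subset_support hv' hmp, List.mem_cons_of_mem _ hmq, hmr⟩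
    obtain ⟨m, hmp, hmq, hmr⟩ := ih (hp.concat hv' hvv') hq' hr
    rw [Walk.support_concat, List.mem_append, List.mem_singleton] at hmp
    rcases hmp with hmp | rfl
    · exact ⟨m, hmp, List.mem_cons_of_mem _ hmq, hmr⟩
    -- the path `r` to `m` must pass through `v`, as `p` followed by the edge `v m` is a path
    refine ⟨v, p.end_mem_support, Walk.start_mem_support _,
      r.support_takeUntil_subset_support hmr (not_not.1 fun hv => hv' ?_)⟩
    exact hG.mem_support_of_ne_mem_support_of_adj_of_isPath hp (hr.takeUntil hmr) hvv' hv

theorem IsAcyclic.exists_mem_support (hG : G.IsAcyclic) {u v w : V} (p : G.Walk u v)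
    (q : G.Walk v w) (r : G.Walk u w) :
    ∃ m, m ∈ p.support ∧ m ∈ q.support ∧ m ∈ r.support := by
  classical
  obtain ⟨m, hp, hq, hr⟩ := hG.exists_mem_support_of_isPath p.bypass_isPath q.bypass_isPath
    r.bypass_isPath
  exact ⟨m, p.support_bypass_subset_support hp, q.support_bypass_subset_support hq,
    r.support_bypass_subset_support hr⟩

end SimpleGraph

/-- A hole of length `n` of the connectivity graph with a temporal path along each side. -/
structure TemporalHole {V : Type*} (lab : V → V → Finset ℕ) (n : ℕ) where
  corner : ℕ → V
  side : ℕ → TPath lab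
  corner_add (j : ℕ) : corner (j + n) = corner j
  side_fromTo (j : ℕ) :
    (side j).FromTo (corner j) (corner (j + 1)) ∨ (side j).FromTo (corner (j + 1)) (corner j)
  not_tempConnected (i j : ℕ) :
    i + 2 ≤ j → j + 2 ≤ i + n → ¬ TempConnected lab (corner i) (corner j)

namespace TemporalHole

variable {V : Type*} {lab : V → V → Finset ℕ} {n : ℕ} {m : V}

theorem false_of_mem_of_mem (H : TemporalHole lab n) {i j : ℕ}
    (hi : m ∈ (H.side i).vertexSet) (hj : m ∈ (H.side j).vertexSet)
    (hij : i + 3 ≤ j) (hji : j + 3 ≤ i + n) : False := by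
  rcases H.side_fromTo i with hPi | hPi <;> rcases H.side_fromTo j with hPj | hPj <;>
    rcases hPi.tempConnected_or_of_mem hPj hi hj with h | h <;>
    first
    | exact H.not_tempConnected _ _ (by omega) (by omega) h
    | exact H.not_tempConnected _ _ (by omega) (by omega) h.symm

theorem fromTo_add_two (H : TemporalHole lab n) (hn : 4 ≤ n) {j : ℕ}
    (h₀ : m ∈ (H.side j).vertexSet) (h₂ : m ∈ (H.side (j + 2)).vertexSet)
    (hj : (H.side j).FromTo (H.corner j) (H.corner (j + 1))) :
    (H.side (j + 2)).FromTo (H.corner (j + 2)) (H.corner (j + 3)) := by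
  refine (H.side_fromTo (j + 2)).resolve_right fun hj₂ => ?_
  rcases hj.tempConnected_or_of_mem hj₂ h₀ h₂ with h | h
  exacts [H.not_tempConnected _ _ (by omega) (by omega) h,
    H.not_tempConnected _ _ (by omega) (by omega) h.symm]

theorem fromTo_add_two_swap (H : TemporalHole lab n) (hn : 4 ≤ n) {j : ℕ}
    (h₀ : m ∈ (H.side j).vertexSet) (h₂ : m ∈ (H.side (j + 2)).vertexSet)
    (hj : (H.side j).FromTo (H.corner (j + 1)) (H.corner j)) :
    (H.side (j + 2)).FromTo (H.corner (j + 3)) (H.corner (j + 2)) := by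
  refine (H.side_fromTo (j + 2)).resolve_left fun hj₂ => ?_
  rcases hj.tempConnected_or_of_mem hj₂ h₀ h₂ with h | h
  exacts [H.not_tempConnected _ _ (by omega) (by omega) h,
    H.not_tempConnected _ _ (by omega) (by omega) h.symm]

/-- Alternate sides through a common vertex are oriented alike, and then the three-path lemma
joins two opposite corners of the hexagon. -/
theorem false_of_eq_six (H : TemporalHole lab n) (hn : n = 6) {j : ℕ}
    (h₀ : m ∈ (H.side j).vertexSet) (h₂ : m ∈ (H.side (j + 2)).vertexSet)
    (h₄ : m ∈ (H.side (j + 4)).vertexSet) : False := by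
  rcases H.side_fromTo j with hj | hj
  · have hj₂ := H.fromTo_add_two (by omega) h₀ h₂ hj
    have hj₄ := H.fromTo_add_two (by omega) h₂ h₄ hj₂
    rcases hj.tempConnected_or_or_of_mem hj₂ hj₄ h₀ h₂ h₄ with h | h | h
    exacts [H.not_tempConnected _ _ (by omega) (by omega) h,
      H.not_tempConnected _ _ (by omega) (by omega) h,
      H.not_tempConnected _ _ (by omega) (by omega) h.symm]
  · have hj₂ := H.fromTo_add_two_swap (by omega) h₀ h₂ hj
    have hj₄ := H.fromTo_add_two_swap (by omega) h₂ h₄ hj₂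
    rcases hj.tempConnected_or_or_of_mem hj₄ hj₂ h₀ h₄ h₂ with h | h | h
    exacts [H.not_tempConnected _ _ (by omega) (by omega) h,
      H.not_tempConnected _ _ (by omega) (by omega) h.symm,
      H.not_tempConnected _ _ (by omega) (by omega) h.symm]

theorem exists_walk_side (H : TemporalHole lab n) (j : ℕ) :
    ∃ w : (underlyingGraph lab).Walk (H.corner j) (H.corner (j + 1)),
      ∀ y ∈ w.support, y ∈ (H.side j).vertexSet := by
  rcases H.side_fromTo j with h | h
  · exact h.exists_walk
  · obtain ⟨w, hw⟩ := h.exists_walk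
    exact ⟨w.reverse, fun y hy => hw y (by simpa using hy)⟩

/-- The median in the tree of the corners `1`, `3`, `5` lies on sides `a ∈ {1, 2}`,
`b ∈ {3, 4}` and `c ∈ [5, n]`; two of these are three apart around the cycle unless `n = 6` and
they are alternate. -/
theorem false_of_isAcyclic (H : TemporalHole lab n) (hG : (underlyingGraph lab).IsAcyclic)
    (hn : 6 ≤ n) : False := by
  obtain ⟨p, hp⟩ := SimpleGraph.exists_walk_of_forall_exists_walk_succ H.exists_walk_side
    (show 1 < 3 by omega)
  obtain ⟨q, hq⟩ := SimpleGraph.exists_walk_of_forall_exists_walk_succ H.exists_walk_side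
    (show 3 < 5 by omega)
  obtain ⟨r, hr⟩ := SimpleGraph.exists_walk_of_forall_exists_walk_succ H.exists_walk_side
    (show 5 < 1 + n by omega)
  obtain ⟨m, hmp, hmq, hmr⟩ := hG.exists_mem_support p q (r.copy rfl (H.corner_add 1)).reverse
  obtain ⟨a, ha₁, ha₂, hma⟩ := hp m hmp
  obtain ⟨b, hb₁, hb₂, hmb⟩ := hq m hmq
  obtain ⟨c, hc₁, hc₂, hmc⟩ := hr m (by simpa using hmr)
  have hab : ¬ (a + 3 ≤ b ∧ b + 3 ≤ a + n) := fun h => H.false_of_mem_of_mem hma hmb h.1 h.2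
  have hbc : ¬ (b + 3 ≤ c ∧ c + 3 ≤ b + n) := fun h => H.false_of_mem_of_mem hmb hmc h.1 h.2
  have hac : ¬ (a + 3 ≤ c ∧ c + 3 ≤ a + n) := fun h => H.false_of_mem_of_mem hma hmc h.1 h.2
  obtain ⟨hn6, rfl, rfl⟩ : n = 6 ∧ b = a + 2 ∧ c = a + 4 := by omega
  exact H.false_of_eq_six hn6 hma hmb hmc

end TemporalHole

theorem Nat.not_modEq_of_lt_of_lt_add {n a b : ℕ} (hab : a < b) (hba : b < a + n) :
    ¬ a ≡ b [MOD n] := fun h =>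
  hab.ne (h.eq_of_abs_lt (abs_lt.2 ⟨by omega, by omega⟩))

namespace IsInducedCycle

variable {V : Type*} {G : SimpleGraph V} {n : ℕ} [NeZero n] {c : Fin n → V}

theorem adj_ofNat_succ (h : IsInducedCycle G n c) (j : ℕ) :
    G.Adj (c (Fin.ofNat n j)) (c (Fin.ofNat n (j + 1))) :=
  (h.2 _ _).2 (.inl (by simp only [Fin.val_ofNat, Nat.mod_add_mod]))

theorem ofNat_ne (h : IsInducedCycle G n c) {i j : ℕ} (hij : i < j) (hji : j < i + n) :
    c (Fin.ofNat n i) ≠ c (Fin.ofNat n j) := fun hc =>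
  Nat.not_modEq_of_lt_of_lt_add hij hji (Fin.ext_iff.1 (h.1 hc))

theorem not_adj_ofNat (h : IsInducedCycle G n c) {i j : ℕ} (hij : i + 2 ≤ j)
    (hji : j + 2 ≤ i + n) : ¬ G.Adj (c (Fin.ofNat n i)) (c (Fin.ofNat n j)) := by
  rw [h.2, Fin.val_ofNat, Fin.val_ofNat, Nat.mod_add_mod, Nat.mod_add_mod,
    ← Nat.add_mod_right i n]
  rintro (h | h)
  exacts [Nat.not_modEq_of_lt_of_lt_add (by omega) (by omega) h,
    Nat.not_modEq_of_lt_of_lt_add (by omega) (by omega) h]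

end IsInducedCycle

theorem connGraph_no_even_hole_general {V : Type*} (lab : V → V → Finset ℕ)
    (htree : IsTemporalOrientedTree lab) :
    ¬ ∃ n : ℕ, 6 ≤ n ∧ Even n ∧ ∃ c : Fin n → V, IsInducedCycle (connGraph lab) n c := by
  rintro ⟨n, hn, -, c, hc⟩
  have : NeZero n := ⟨by omega⟩
  choose side hside using fun j => (hc.adj_ofNat_succ j).2.exists_fromTo
  refine TemporalHole.false_of_isAcyclic ⟨fun j => c (Fin.ofNat n j), side,
    fun j => congrArg c (Fin.ext (by simp)), hside, fun i j hij hji htc => ?_⟩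
    htree.1.isAcyclic hn
  exact hc.not_adj_ofNat hij hji ⟨hc.ofNat_ne (by omega) (by omega), htc⟩

/-- The connectivity graph of a temporal oriented tree contains no even hole. -/
theorem connGraph_no_even_hole {V : Type*} [Fintype V] (lab : V → V → Finset ℕ)
    (hpos : PositiveLabels lab) (htree : IsTemporalOrientedTree lab) :
    ¬ ∃ n : ℕ, 6 ≤ n ∧ Even n ∧ ∃ c : Fin n → V, IsInducedCycle (connGraph lab) n c :=
  connGraph_no_even_hole_general lab htree
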